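/- For every real V > 8, consider keys 1, …, 6 with weights (1, V, 1, 1, V, 1). Then the function l ↦ OPT({1,…,l}) + OPT({l+1,…,6}) on l ∈ {1,…,5} attains its minimum uniquely at l = 3, while the function l ↦ OPT({2,…,l}) + OPT({l+1,…,6}) on l ∈ {2,…,5} attains its minimum uniquely at l = 2. Hence the dynamic-programming minimizers satisfy L_{1,6} = 3 > 2 = L_{2,6}, violating the minimizer-monotonicity property L_{i,j} ≤ L_{i+1,j}. -/
import Mathlib


namespace TwoWCST

/-- A two-way comparison search tree: leaves hold keys, internal nodes are
equal-to tests `⟨= k⟩` or less-than tests `⟨< k⟩`, each with a yes and a no child. -/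
inductive CTree : Type where
  | leaf (k : ℕ) : CTree
  | eqTest (k : ℕ) (yes no : CTree) : CTree
  | ltTest (k : ℕ) (yes no : CTree) : CTree

/-- The leaf reached when searching for query `q`. -/
def searchKey : CTree → ℕ → ℕ
  | .leaf k, _ => k
  | .eqTest k y n, q => if q = k then searchKey y q else searchKey n q
  | .ltTest k y n, q => if q < k then searchKey y q else searchKey n q

/-- Number of comparisons on the search path of `q`. -/
def depthOf : CTree → ℕ → ℕ
  | .leaf _, _ => 0
  | .eqTest k y n, q => (if q = k then depthOf y q else depthOf n q) + 1
  | .ltTest k y n, q => (if q < k then depthOf y q else depthOf n q) + 1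

/-- The set of keys labeling the leaves of the tree. -/
def leaves : CTree → Finset ℕ
  | .leaf k => {k}
  | .eqTest _ y n => leaves y ∪ leaves n
  | .ltTest _ y n => leaves y ∪ leaves n

/-- `T` is a 2WCST for the sub-instance `I`: every leaf is labeled by a key of `I`,
and the search for every key `q ∈ I` ends at a leaf labeled `q`. -/
def Valid (I : Finset ℕ) (T : CTree) : Prop :=
  leaves T ⊆ I ∧ ∀ q ∈ I, searchKey T q = q

/-- Cost of a 2WCST: `∑ q ∈ I, w q * depth_T q`. -/
noncomputable def cost (w : ℕ → ℝ) (I : Finset ℕ) (T : CTree) : ℝ :=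
  ∑ q ∈ I, w q * (depthOf T q : ℝ)

/-- `T` is an optimal 2WCST for `I` (w.r.t. weights `w`). -/
def IsOptimal (w : ℕ → ℝ) (I : Finset ℕ) (T : CTree) : Prop :=
  Valid I T ∧ ∀ T', Valid I T' → cost w I T ≤ cost w I T'

/-- Total weight of the keys at the leaves of `T`. -/
noncomputable def treeWeight (w : ℕ → ℝ) (T : CTree) : ℝ :=
  ∑ k ∈ leaves T, w k

/-- Side-weight of the root node of `T`. -/
noncomputable def sw (w : ℕ → ℝ) : CTree → ℝ
  | .leaf _ => 0
  | .eqTest k _ _ => w k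
  | .ltTest _ y n => min (treeWeight w y) (treeWeight w n)

/-- The root of `T` is an equal-to test. -/
def EqRoot : CTree → Prop
  | .eqTest _ _ _ => True
  | _ => False

/-- The root of `T` is a less-than test. -/
def LtRoot : CTree → Prop
  | .ltTest _ _ _ => True
  | _ => False

/-- `T` is rooted at two consecutive equal-to tests: the root is an equal-to test
and the root of its 'no' subtree is also an equal-to test. -/
def TwoEqRoot : CTree → Prop
  | .eqTest _ _ (.eqTest _ _ _) => True
  | _ => False

/-- All internal nodes of `T` are equal-to tests. -/
def OnlyEq : CTree → Prop
  | .leaf _ => True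
  | .eqTest _ y n => OnlyEq y ∧ OnlyEq n
  | .ltTest _ _ _ => False

/-- All internal nodes of `T` are less-than tests. -/
def OnlyLt : CTree → Prop
  | .leaf _ => True
  | .eqTest _ _ _ => False
  | .ltTest _ y n => OnlyLt y ∧ OnlyLt n

/-- `M` is the main branch of (the root of) `T`: the 'no' child for an equal-to
test, and a child subtree of maximum total weight for a less-than test
(either choice allowed in case of ties). -/
def IsMainBranch (w : ℕ → ℝ) (T M : CTree) : Prop :=
  match T with
  | .leaf _ => False
  | .eqTest _ _ n => M = n
  | .ltTest _ y n => (M = y ∧ treeWeight w n ≤ treeWeight w y) ∨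
      (M = n ∧ treeWeight w y ≤ treeWeight w n)

/-- `OPT I`: the minimum cost of a 2WCST for `I`. -/
noncomputable def OPT (w : ℕ → ℝ) (I : Finset ℕ) : ℝ :=
  sInf {c | ∃ T, Valid I T ∧ cost w I T = c}

/-- `C^=(I)`: the minimum cost of a 2WCST for `I` rooted at an equal-to test. -/
noncomputable def CEq (w : ℕ → ℝ) (I : Finset ℕ) : ℝ :=
  sInf {c | ∃ T, Valid I T ∧ EqRoot T ∧ cost w I T = c}

/-- `C^<(I)`: the minimum cost of a 2WCST for `I` rooted at a less-than test. -/
noncomputable def CLt (w : ℕ → ℝ) (I : Finset ℕ) : ℝ :=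
  sInf {c | ∃ T, Valid I T ∧ LtRoot T ∧ cost w I T = c}

-- aux lemmas
lemma depth_pos (T : CTree) (a b : ℕ) (hab : a ≠ b)
    (ha : searchKey T a = a) (hb : searchKey T b = b) (q : ℕ) :
    1 ≤ depthOf T q := by
  match T with
  | .leaf k => simp [searchKey] at ha hb; omega
  | .eqTest k y n => exact Nat.le_add_left 1 _
  | .ltTest k y n => exact Nat.le_add_left 1 _

/-- At most one "shallow" key: all correct keys except possibly one have depth ≥ 2. -/
lemma exists_shallow (T : CTree) (a b c : ℕ)
    (hab : a ≠ b) (hac : a ≠ c) (hbc : b ≠ c)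
    (ha : searchKey T a = a) (hb : searchKey T b = b) (hc : searchKey T c = c) :
    ∃ q0, ∀ q, searchKey T q = q → q ≠ q0 → 2 ≤ depthOf T q := by
  match T with
  | .leaf k => simp [searchKey] at ha hb; omega
  | .eqTest k y n =>
    -- two of a,b,c are ≠ k
    have key : ∃ x y', x ≠ y' ∧ x ≠ k ∧ y' ≠ k ∧ searchKey n x = x ∧ searchKey n y' = y' := by
      by_cases hak : a = k
      · exact ⟨b, c, hbc, by omega, by omega, by simpa [searchKey, show b ≠ k by omega] using hb,
          by simpa [searchKey, show c ≠ k by omega] using hc⟩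
      · by_cases hbk : b = k
        · exact ⟨a, c, hac, hak, by omega, by simpa [searchKey, hak] using ha,
            by simpa [searchKey, show c ≠ k by omega] using hc⟩
        · exact ⟨a, b, hab, hak, hbk, by simpa [searchKey, hak] using ha,
            by simpa [searchKey, hbk] using hb⟩
    obtain ⟨x, y', hxy, hxk, hyk, hx, hy⟩ := key
    refine ⟨k, fun q hq hqk => ?_⟩
    have h1 : 1 ≤ depthOf n q := depth_pos n x y' hxy hx hy q
    simp only [depthOf, if_neg hqk]
    omega
  | .ltTest k y n =>
    by_cases h2 : (a < k ∧ b < k) ∨ (a < k ∧ c < k) ∨ (b < k ∧ c < k)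
    · -- two keys on the yes side
      have key : ∃ x y', x ≠ y' ∧ searchKey y x = x ∧ searchKey y y' = y' := by
        rcases h2 with ⟨h1, h2⟩ | ⟨h1, h2⟩ | ⟨h1, h2⟩
        · exact ⟨a, b, hab, by simpa [searchKey, h1] using ha, by simpa [searchKey, h2] using hb⟩
        · exact ⟨a, c, hac, by simpa [searchKey, h1] using ha, by simpa [searchKey, h2] using hc⟩
        · exact ⟨b, c, hbc, by simpa [searchKey, h1] using hb, by simpa [searchKey, h2] using hc⟩
      obtain ⟨x, y', hxy, hx, hy⟩ := key
      have hy1 : ∀ q, 1 ≤ depthOf y q := depth_pos y x y' hxy hx hy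
      match n with
      | .leaf m =>
        refine ⟨m, fun q hq hqm => ?_⟩
        by_cases hqk : q < k
        · have := hy1 q; simp only [depthOf, if_pos hqk]; omega
        · exfalso; simp [searchKey, hqk] at hq; omega
      | .eqTest k' y' n' =>
        refine ⟨a, fun q hq _ => ?_⟩
        by_cases hqk : q < k
        · have := hy1 q; simp only [depthOf, if_pos hqk]; omega
        · simp only [depthOf, if_neg hqk]; have : 1 ≤ depthOf (CTree.eqTest k' y' n') q :=
            Nat.le_add_left 1 _
          omega
      | .ltTest k' y' n' =>
        refine ⟨a, fun q hq _ => ?_⟩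
        by_cases hqk : q < k
        · have := hy1 q; simp only [depthOf, if_pos hqk]; omega
        · simp only [depthOf, if_neg hqk]; have : 1 ≤ depthOf (CTree.ltTest k' y' n') q :=
            Nat.le_add_left 1 _
          omega
    · -- two keys on the no side
      have key : ∃ x y', x ≠ y' ∧ searchKey n x = x ∧ searchKey n y' = y' := by
        by_cases ha' : a < k
        · -- then b,c not < k
          have hb' : ¬ b < k := by tauto
          have hc' : ¬ c < k := by tauto
          exact ⟨b, c, hbc, by simpa [searchKey, hb'] using hb, by simpa [searchKey, hc'] using hc⟩
        · by_cases hb' : b < k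
          · have hc' : ¬ c < k := by tauto
            exact ⟨a, c, hac, by simpa [searchKey, ha'] using ha, by simpa [searchKey, hc'] using hc⟩
          · exact ⟨a, b, hab, by simpa [searchKey, ha'] using ha, by simpa [searchKey, hb'] using hb⟩
      obtain ⟨x, y'', hxy, hx, hy⟩ := key
      have hn1 : ∀ q, 1 ≤ depthOf n q := depth_pos n x y'' hxy hx hy
      match y with
      | .leaf m =>
        refine ⟨m, fun q hq hqm => ?_⟩
        by_cases hqk : q < k
        · exfalso; simp [searchKey, hqk] at hq; omega
        · have := hn1 q; simp only [depthOf, if_neg hqk]; omega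
      | .eqTest k' yy nn =>
        refine ⟨a, fun q hq _ => ?_⟩
        by_cases hqk : q < k
        · simp only [depthOf, if_pos hqk]; have : 1 ≤ depthOf (CTree.eqTest k' yy nn) q :=
            Nat.le_add_left 1 _
          omega
        · have := hn1 q; simp only [depthOf, if_neg hqk]; omega
      | .ltTest k' yy nn =>
        refine ⟨a, fun q hq _ => ?_⟩
        by_cases hqk : q < k
        · simp only [depthOf, if_pos hqk]; have : 1 ≤ depthOf (CTree.ltTest k' yy nn) q :=
            Nat.le_add_left 1 _
          omega
        · have := hn1 q; simp only [depthOf, if_neg hqk]; omega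
/-- If a key `q0` has depth ≤ 1, all other correct keys live in a common subtree. -/
lemma sibling (T : CTree) (q0 a b : ℕ) (hq0 : searchKey T q0 = q0) (hd : depthOf T q0 ≤ 1)
    (hab : a ≠ b) (haq : a ≠ q0) (hbq : b ≠ q0)
    (ha : searchKey T a = a) (hb : searchKey T b = b) :
    ∃ T', ∀ q, searchKey T q = q → q ≠ q0 →
      searchKey T' q = q ∧ depthOf T q = depthOf T' q + 1 := by
  match T with
  | .leaf k => simp [searchKey] at ha hb; omega
  | .eqTest k y n =>
    by_cases hqk : q0 = k
    · refine ⟨n, fun q hq hqne => ?_⟩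
      have hqk' : q ≠ k := by omega
      constructor
      · simpa [searchKey, hqk'] using hq
      · simp [depthOf, hqk']
    · -- n must be a leaf labeled q0, contradiction with a or b
      exfalso
      have hd' : depthOf n q0 = 0 := by
        simp only [depthOf, if_neg hqk] at hd; omega
      match n with
      | .eqTest k' y' n' => simp [depthOf] at hd'
      | .ltTest k' y' n' => simp [depthOf] at hd'
      | .leaf m =>
        have hm : m = q0 := by simpa [searchKey, hqk] using hq0
        by_cases hak : a = k
        · have : b ≠ k := by omega
          simp [searchKey, this, hm] at hb; omega
        · simp [searchKey, hak, hm] at ha; omega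
  | .ltTest k y n =>
    by_cases hqk : q0 < k
    · have hd' : depthOf y q0 = 0 := by
        simp only [depthOf, if_pos hqk] at hd; omega
      match y with
      | .eqTest k' y' n' => simp [depthOf] at hd'
      | .ltTest k' y' n' => simp [depthOf] at hd'
      | .leaf m =>
        have hm : m = q0 := by simpa [searchKey, hqk] using hq0
        refine ⟨n, fun q hq hqne => ?_⟩
        have hqk' : ¬ q < k := by
          intro h; simp [searchKey, h, hm] at hq; omega
        constructor
        · simpa [searchKey, hqk'] using hq
        · simp [depthOf, hqk']
    · have hd' : depthOf n q0 = 0 := by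
        simp only [depthOf, if_neg hqk] at hd; omega
      match n with
      | .eqTest k' y' n' => simp [depthOf] at hd'
      | .ltTest k' y' n' => simp [depthOf] at hd'
      | .leaf m =>
        have hm : m = q0 := by simpa [searchKey, hqk] using hq0
        refine ⟨y, fun q hq hqne => ?_⟩
        have hqk' : q < k := by
          by_contra h; simp [searchKey, h, hm] at hq; omega
        constructor
        · simpa [searchKey, hqk'] using hq
        · simp [depthOf, hqk']
lemma cost_nonneg (w : ℕ → ℝ) (hw : ∀ k, 0 ≤ w k) (I : Finset ℕ) (T : CTree) :
    0 ≤ cost w I T :=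
  Finset.sum_nonneg fun q _ => mul_nonneg (hw q) (Nat.cast_nonneg _)

lemma opt_le (w : ℕ → ℝ) (hw : ∀ k, 0 ≤ w k) (I : Finset ℕ) (T : CTree) (hT : Valid I T) :
    OPT w I ≤ cost w I T := by
  apply csInf_le
  · exact ⟨0, fun c ⟨T', hT', hc⟩ => hc ▸ cost_nonneg w hw I T'⟩
  · exact ⟨T, hT, rfl⟩

lemma le_opt (w : ℕ → ℝ) (I : Finset ℕ) (c : ℝ) (T0 : CTree) (hT0 : Valid I T0)
    (h : ∀ T, Valid I T → c ≤ cost w I T) : c ≤ OPT w I :=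
  le_csInf ⟨_, T0, hT0, rfl⟩ (fun x ⟨T, hT, hc⟩ => hc ▸ h T hT)

lemma opt_nonneg (w : ℕ → ℝ) (hw : ∀ k, 0 ≤ w k) (I : Finset ℕ) (T0 : CTree)
    (hT0 : Valid I T0) : 0 ≤ OPT w I :=
  le_opt w I 0 T0 hT0 fun T _ => cost_nonneg w hw I T

/-- Lower bound for two keys. -/
lemma lb_two (w : ℕ → ℝ) (a b : ℕ) (hab : a ≠ b) (hwa : 0 ≤ w a) (hwb : 0 ≤ w b)
    (T : CTree) (hT : Valid ({a, b} : Finset ℕ) T) :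
    w a + w b ≤ cost w {a, b} T := by
  obtain ⟨-, hs⟩ := hT
  have ha := hs a (by simp)
  have hb := hs b (by simp)
  have hda := depth_pos T a b hab ha hb a
  have hdb := depth_pos T a b hab ha hb b
  have hda' : (1 : ℝ) ≤ (depthOf T a : ℝ) := by exact_mod_cast hda
  have hdb' : (1 : ℝ) ≤ (depthOf T b : ℝ) := by exact_mod_cast hdb
  rw [cost, Finset.sum_pair hab]
  nlinarith [mul_le_mul_of_nonneg_left hda' hwa, mul_le_mul_of_nonneg_left hdb' hwb]

/-- Lower bound for three keys, one heavy. -/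
lemma lb_three (w : ℕ → ℝ) (V : ℝ) (hV : 2 ≤ V) (a b c : ℕ)
    (hab : a ≠ b) (hac : a ≠ c) (hbc : b ≠ c)
    (hwa : w a = V) (hwb : w b = 1) (hwc : w c = 1)
    (T : CTree) (hT : Valid ({a, b, c} : Finset ℕ) T) :
    V + 4 ≤ cost w {a, b, c} T := by
  obtain ⟨-, hs⟩ := hT
  have ha := hs a (by simp)
  have hb := hs b (by simp)
  have hc := hs c (by simp)
  have hda := depth_pos T a b hab ha hb a
  have hdb := depth_pos T a b hab ha hb b
  have hdc := depth_pos T a b hab ha hb c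
  obtain ⟨q0, hq0⟩ := exists_shallow T a b c hab hac hbc ha hb hc
  have hcost : cost w {a, b, c} T
      = V * (depthOf T a : ℝ) + (depthOf T b : ℝ) + (depthOf T c : ℝ) := by
    rw [cost, Finset.sum_insert (by simp [hab, hac]), Finset.sum_insert (by simp [hbc]),
      Finset.sum_singleton, hwa, hwb, hwc]
    ring
  rw [hcost]
  have hda' : (1 : ℝ) ≤ (depthOf T a : ℝ) := by exact_mod_cast hda
  by_cases h : a = q0
  · have h1 : 2 ≤ depthOf T b := hq0 b hb (by omega)
    have h2 : 2 ≤ depthOf T c := hq0 c hc (by omega)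
    have h1' : (2 : ℝ) ≤ (depthOf T b : ℝ) := by exact_mod_cast h1
    have h2' : (2 : ℝ) ≤ (depthOf T c : ℝ) := by exact_mod_cast h2
    nlinarith [mul_le_mul_of_nonneg_left hda' (by linarith : (0:ℝ) ≤ V)]
  · have h1 : 2 ≤ depthOf T a := hq0 a ha (by omega)
    have h1' : (2 : ℝ) ≤ (depthOf T a : ℝ) := by exact_mod_cast h1
    have hdb' : (1 : ℝ) ≤ (depthOf T b : ℝ) := by exact_mod_cast hdb
    have hdc' : (1 : ℝ) ≤ (depthOf T c : ℝ) := by exact_mod_cast hdc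
    nlinarith [mul_le_mul_of_nonneg_left h1' (by linarith : (0:ℝ) ≤ V)]
/-- Lower bound for four keys, one heavy. -/
lemma lb_four1 (w : ℕ → ℝ) (V : ℝ) (hV : 5 ≤ V) (h0 a b c : ℕ)
    (h1 : h0 ≠ a) (h2 : h0 ≠ b) (h3 : h0 ≠ c)
    (hab : a ≠ b) (hac : a ≠ c) (hbc : b ≠ c)
    (hwh : w h0 = V) (hwa : w a = 1) (hwb : w b = 1) (hwc : w c = 1)
    (T : CTree) (hT : Valid ({h0, a, b, c} : Finset ℕ) T) :
    V + 8 ≤ cost w {h0, a, b, c} T := by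
  obtain ⟨-, hs⟩ := hT
  have hh := hs h0 (by simp)
  have ha := hs a (by simp)
  have hb := hs b (by simp)
  have hc := hs c (by simp)
  have hdh := depth_pos T a b hab ha hb h0
  have hcost : cost w {h0, a, b, c} T
      = V * (depthOf T h0 : ℝ) + (depthOf T a : ℝ) + (depthOf T b : ℝ) + (depthOf T c : ℝ) := by
    rw [cost, Finset.sum_insert (by simp [h1, h2, h3]),
      Finset.sum_insert (by simp [hab, hac]), Finset.sum_insert (by simp [hbc]),
      Finset.sum_singleton, hwh, hwa, hwb, hwc]
    ring
  rw [hcost]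
  have hVpos : (0:ℝ) ≤ V := by linarith
  by_cases hdep : depthOf T h0 ≤ 1
  · -- heavy key at depth 1: the lights share a subtree
    obtain ⟨T', hT'⟩ := sibling T h0 a b hh hdep hab h1.symm h2.symm ha hb
    obtain ⟨sa, da⟩ := hT' a ha h1.symm
    obtain ⟨sb, db⟩ := hT' b hb h2.symm
    obtain ⟨sc, dc⟩ := hT' c hc h3.symm
    obtain ⟨q1, hq1⟩ := exists_shallow T' a b c hab hac hbc sa sb sc
    have ga := depth_pos T' a b hab sa sb a
    have gb := depth_pos T' a b hab sa sb b
    have gc := depth_pos T' a b hab sa sb c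
    -- among a b c at most one has depth 1 in T'
    have hsum : 5 ≤ depthOf T' a + depthOf T' b + depthOf T' c := by
      by_cases e1 : a = q1
      · have := hq1 b sb (by omega); have := hq1 c sc (by omega); omega
      · by_cases e2 : b = q1
        · have := hq1 a sa (by omega); have := hq1 c sc (by omega); omega
        · have := hq1 a sa (by omega); have := hq1 b sb (by omega); omega
    have hsum' : (8 : ℝ) ≤ (depthOf T a : ℝ) + (depthOf T b : ℝ) + (depthOf T c : ℝ) := by
      have : 8 ≤ depthOf T a + depthOf T b + depthOf T c := by omega
      exact_mod_cast this
    have hdh' : (1 : ℝ) ≤ (depthOf T h0 : ℝ) := by exact_mod_cast hdh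
    nlinarith [mul_le_mul_of_nonneg_left hdh' hVpos]
  · have hdh2 : (2 : ℝ) ≤ (depthOf T h0 : ℝ) := by
      have : 2 ≤ depthOf T h0 := by omega
      exact_mod_cast this
    have hda' : (1 : ℝ) ≤ (depthOf T a : ℝ) := by
      exact_mod_cast depth_pos T a b hab ha hb a
    have hdb' : (1 : ℝ) ≤ (depthOf T b : ℝ) := by
      exact_mod_cast depth_pos T a b hab ha hb b
    have hdc' : (1 : ℝ) ≤ (depthOf T c : ℝ) := by
      exact_mod_cast depth_pos T a b hab ha hb c
    nlinarith [mul_le_mul_of_nonneg_left hdh2 hVpos]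

/-- Lower bound for four keys, two heavy. -/
lemma lb_four2 (w : ℕ → ℝ) (V : ℝ) (hV : 2 ≤ V) (h0 g0 a b : ℕ)
    (h1 : h0 ≠ g0) (h2 : h0 ≠ a) (h3 : h0 ≠ b) (h4 : g0 ≠ a) (h5 : g0 ≠ b) (hab : a ≠ b)
    (hwh : w h0 = V) (hwg : w g0 = V) (hwa : w a = 1) (hwb : w b = 1)
    (T : CTree) (hT : Valid ({h0, g0, a, b} : Finset ℕ) T) :
    3 * V + 2 ≤ cost w {h0, g0, a, b} T := by
  obtain ⟨-, hs⟩ := hT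
  have hh := hs h0 (by simp)
  have hg := hs g0 (by simp)
  have ha := hs a (by simp)
  have hb := hs b (by simp)
  have hcost : cost w {h0, g0, a, b} T
      = V * (depthOf T h0 : ℝ) + V * (depthOf T g0 : ℝ)
        + (depthOf T a : ℝ) + (depthOf T b : ℝ) := by
    rw [cost, Finset.sum_insert (by simp [h1, h2, h3]),
      Finset.sum_insert (by simp [h4, h5]), Finset.sum_insert (by simp [hab]),
      Finset.sum_singleton, hwh, hwg, hwa, hwb]
    ring
  rw [hcost]
  have hVpos : (0:ℝ) ≤ V := by linarith
  obtain ⟨q0, hq0⟩ := exists_shallow T h0 g0 a h1 h2 h4 hh hg ha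
  have dh := depth_pos T h0 g0 h1 hh hg h0
  have dg := depth_pos T h0 g0 h1 hh hg g0
  have da := depth_pos T h0 g0 h1 hh hg a
  have db := depth_pos T h0 g0 h1 hh hg b
  by_cases e : h0 = q0
  · have k1 : 2 ≤ depthOf T g0 := hq0 g0 hg (by omega)
    have k2 : 2 ≤ depthOf T a := hq0 a ha (by omega)
    have k3 : 2 ≤ depthOf T b := hq0 b hb (by omega)
    have r0 : (1:ℝ) ≤ (depthOf T h0 : ℝ) := by exact_mod_cast dh
    have r1 : (2:ℝ) ≤ (depthOf T g0 : ℝ) := by exact_mod_cast k1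
    have r2 : (2:ℝ) ≤ (depthOf T a : ℝ) := by exact_mod_cast k2
    have r3 : (2:ℝ) ≤ (depthOf T b : ℝ) := by exact_mod_cast k3
    nlinarith [mul_le_mul_of_nonneg_left r0 hVpos, mul_le_mul_of_nonneg_left r1 hVpos]
  · have k1 : 2 ≤ depthOf T h0 := hq0 h0 hh (by omega)
    have r0 : (2:ℝ) ≤ (depthOf T h0 : ℝ) := by exact_mod_cast k1
    have r1 : (1:ℝ) ≤ (depthOf T g0 : ℝ) := by exact_mod_cast dg
    have r2 : (1:ℝ) ≤ (depthOf T a : ℝ) := by exact_mod_cast da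
    have r3 : (1:ℝ) ≤ (depthOf T b : ℝ) := by exact_mod_cast db
    nlinarith [mul_le_mul_of_nonneg_left r0 hVpos, mul_le_mul_of_nonneg_left r1 hVpos]

/-- Lower bound for five keys, two heavy. -/
lemma lb_five2 (w : ℕ → ℝ) (V : ℝ) (hV : 2 ≤ V) (h0 g0 a b c : ℕ)
    (h1 : h0 ≠ g0) (h2 : h0 ≠ a) (h3 : h0 ≠ b) (h3' : h0 ≠ c)
    (h4 : g0 ≠ a) (h5 : g0 ≠ b) (h5' : g0 ≠ c)
    (hab : a ≠ b) (hac : a ≠ c) (hbc : b ≠ c)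
    (hwh : w h0 = V) (hwg : w g0 = V) (hwa : w a = 1) (hwb : w b = 1) (hwc : w c = 1)
    (T : CTree) (hT : Valid ({h0, g0, a, b, c} : Finset ℕ) T) :
    3 * V + 3 ≤ cost w {h0, g0, a, b, c} T := by
  obtain ⟨-, hs⟩ := hT
  have hh := hs h0 (by simp)
  have hg := hs g0 (by simp)
  have ha := hs a (by simp)
  have hb := hs b (by simp)
  have hc := hs c (by simp)
  have hcost : cost w {h0, g0, a, b, c} T
      = V * (depthOf T h0 : ℝ) + V * (depthOf T g0 : ℝ)
        + (depthOf T a : ℝ) + (depthOf T b : ℝ) + (depthOf T c : ℝ) := by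
    rw [cost, Finset.sum_insert (by simp [h1, h2, h3, h3']),
      Finset.sum_insert (by simp [h4, h5, h5']), Finset.sum_insert (by simp [hab, hac]),
      Finset.sum_insert (by simp [hbc]), Finset.sum_singleton, hwh, hwg, hwa, hwb, hwc]
    ring
  rw [hcost]
  have hVpos : (0:ℝ) ≤ V := by linarith
  obtain ⟨q0, hq0⟩ := exists_shallow T h0 g0 a h1 h2 h4 hh hg ha
  have dh := depth_pos T h0 g0 h1 hh hg h0
  have dg := depth_pos T h0 g0 h1 hh hg g0
  have da := depth_pos T h0 g0 h1 hh hg a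
  have db := depth_pos T h0 g0 h1 hh hg b
  have dc := depth_pos T h0 g0 h1 hh hg c
  by_cases e : h0 = q0
  · have k1 : 2 ≤ depthOf T g0 := hq0 g0 hg (by omega)
    have k2 : 2 ≤ depthOf T a := hq0 a ha (by omega)
    have k3 : 2 ≤ depthOf T b := hq0 b hb (by omega)
    have k4 : 2 ≤ depthOf T c := hq0 c hc (by omega)
    have r0 : (1:ℝ) ≤ (depthOf T h0 : ℝ) := by exact_mod_cast dh
    have r1 : (2:ℝ) ≤ (depthOf T g0 : ℝ) := by exact_mod_cast k1
    have r2 : (2:ℝ) ≤ (depthOf T a : ℝ) := by exact_mod_cast k2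
    have r3 : (2:ℝ) ≤ (depthOf T b : ℝ) := by exact_mod_cast k3
    have r4 : (2:ℝ) ≤ (depthOf T c : ℝ) := by exact_mod_cast k4
    nlinarith [mul_le_mul_of_nonneg_left r0 hVpos, mul_le_mul_of_nonneg_left r1 hVpos]
  · have k1 : 2 ≤ depthOf T h0 := hq0 h0 hh (by omega)
    have r0 : (2:ℝ) ≤ (depthOf T h0 : ℝ) := by exact_mod_cast k1
    have r1 : (1:ℝ) ≤ (depthOf T g0 : ℝ) := by exact_mod_cast dg
    have r2 : (1:ℝ) ≤ (depthOf T a : ℝ) := by exact_mod_cast da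
    have r3 : (1:ℝ) ≤ (depthOf T b : ℝ) := by exact_mod_cast db
    have r4 : (1:ℝ) ≤ (depthOf T c : ℝ) := by exact_mod_cast dc
    nlinarith [mul_le_mul_of_nonneg_left r0 hVpos, mul_le_mul_of_nonneg_left r1 hVpos]
/-- A chain of equality tests, valid for the keys in the list. -/
def chainL : List ℕ → CTree
  | [] => .leaf 0
  | [k] => .leaf k
  | k :: k' :: rest => .eqTest k (.leaf k) (chainL (k' :: rest))

section Inst
variable (V : ℝ) (hV : 8 < V)

lemma wl_nonneg (hV' : 0 ≤ V) : ∀ k, 0 ≤ (fun k => if k = 2 ∨ k = 5 then V else 1 : ℕ → ℝ) k := by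
  intro k
  by_cases h : k = 2 ∨ k = 5 <;> simp [h] <;> linarith

include hV

lemma olb12 : V + 1 ≤ OPT (fun k => if k = 2 ∨ k = 5 then V else 1 : ℕ → ℝ) (Finset.Icc 1 2) := by
  rw [show Finset.Icc 1 2 = ({1, 2} : Finset ℕ) by decide]
  refine le_opt _ _ _ (chainL [1, 2]) ⟨by decide, by decide⟩ fun T hT => ?_
  have := lb_two (fun k => if k = 2 ∨ k = 5 then V else 1 : ℕ → ℝ) 1 2 (by omega) (by norm_num) (by norm_num; linarith) T hT
  norm_num at this; linarith

lemma olb23 : V + 1 ≤ OPT (fun k => if k = 2 ∨ k = 5 then V else 1 : ℕ → ℝ) (Finset.Icc 2 3) := by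
  rw [show Finset.Icc 2 3 = ({2, 3} : Finset ℕ) by decide]
  refine le_opt _ _ _ (chainL [2, 3]) ⟨by decide, by decide⟩ fun T hT => ?_
  have := lb_two (fun k => if k = 2 ∨ k = 5 then V else 1 : ℕ → ℝ) 2 3 (by omega) (by norm_num; linarith) (by norm_num) T hT
  norm_num at this; linarith

lemma olb56 : V + 1 ≤ OPT (fun k => if k = 2 ∨ k = 5 then V else 1 : ℕ → ℝ) (Finset.Icc 5 6) := by
  rw [show Finset.Icc 5 6 = ({5, 6} : Finset ℕ) by decide]
  refine le_opt _ _ _ (chainL [5, 6]) ⟨by decide, by decide⟩ fun T hT => ?_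
  have := lb_two (fun k => if k = 2 ∨ k = 5 then V else 1 : ℕ → ℝ) 5 6 (by omega) (by norm_num; linarith) (by norm_num) T hT
  norm_num at this; linarith

lemma olb46 : V + 4 ≤ OPT (fun k => if k = 2 ∨ k = 5 then V else 1 : ℕ → ℝ) (Finset.Icc 4 6) := by
  rw [show Finset.Icc 4 6 = ({5, 4, 6} : Finset ℕ) by decide]
  refine le_opt _ _ _ (chainL [5, 4, 6]) ⟨by decide, by decide⟩ fun T hT => ?_
  exact lb_three (fun k => if k = 2 ∨ k = 5 then V else 1 : ℕ → ℝ) V (by linarith) 5 4 6 (by omega) (by omega) (by omega)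
    (by norm_num) (by norm_num) (by norm_num) T hT

lemma olb24 : V + 4 ≤ OPT (fun k => if k = 2 ∨ k = 5 then V else 1 : ℕ → ℝ) (Finset.Icc 2 4) := by
  rw [show Finset.Icc 2 4 = ({2, 3, 4} : Finset ℕ) by decide]
  refine le_opt _ _ _ (chainL [2, 3, 4]) ⟨by decide, by decide⟩ fun T hT => ?_
  exact lb_three (fun k => if k = 2 ∨ k = 5 then V else 1 : ℕ → ℝ) V (by linarith) 2 3 4 (by omega) (by omega) (by omega)
    (by norm_num) (by norm_num) (by norm_num) T hT

lemma olb36 : V + 8 ≤ OPT (fun k => if k = 2 ∨ k = 5 then V else 1 : ℕ → ℝ) (Finset.Icc 3 6) := by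
  rw [show Finset.Icc 3 6 = ({5, 3, 4, 6} : Finset ℕ) by decide]
  refine le_opt _ _ _ (chainL [5, 3, 4, 6]) ⟨by decide, by decide⟩ fun T hT => ?_
  exact lb_four1 (fun k => if k = 2 ∨ k = 5 then V else 1 : ℕ → ℝ) V (by linarith) 5 3 4 6 (by omega) (by omega) (by omega)
    (by omega) (by omega) (by omega)
    (by norm_num) (by norm_num) (by norm_num) (by norm_num) T hT

lemma olb14 : V + 8 ≤ OPT (fun k => if k = 2 ∨ k = 5 then V else 1 : ℕ → ℝ) (Finset.Icc 1 4) := by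
  rw [show Finset.Icc 1 4 = ({2, 1, 3, 4} : Finset ℕ) by decide]
  refine le_opt _ _ _ (chainL [2, 1, 3, 4]) ⟨by decide, by decide⟩ fun T hT => ?_
  exact lb_four1 (fun k => if k = 2 ∨ k = 5 then V else 1 : ℕ → ℝ) V (by linarith) 2 1 3 4 (by omega) (by omega) (by omega)
    (by omega) (by omega) (by omega)
    (by norm_num) (by norm_num) (by norm_num) (by norm_num) T hT

lemma olb25 : 3 * V + 2 ≤ OPT (fun k => if k = 2 ∨ k = 5 then V else 1 : ℕ → ℝ) (Finset.Icc 2 5) := by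
  rw [show Finset.Icc 2 5 = ({2, 5, 3, 4} : Finset ℕ) by decide]
  refine le_opt _ _ _ (chainL [2, 5, 3, 4]) ⟨by decide, by decide⟩ fun T hT => ?_
  exact lb_four2 (fun k => if k = 2 ∨ k = 5 then V else 1 : ℕ → ℝ) V (by linarith) 2 5 3 4 (by omega) (by omega) (by omega)
    (by omega) (by omega) (by omega)
    (by norm_num) (by norm_num) (by norm_num) (by norm_num) T hT

lemma olb26 : 3 * V + 3 ≤ OPT (fun k => if k = 2 ∨ k = 5 then V else 1 : ℕ → ℝ) (Finset.Icc 2 6) := by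
  rw [show Finset.Icc 2 6 = ({2, 5, 3, 4, 6} : Finset ℕ) by decide]
  refine le_opt _ _ _ (chainL [2, 5, 3, 4, 6]) ⟨by decide, by decide⟩ fun T hT => ?_
  exact lb_five2 (fun k => if k = 2 ∨ k = 5 then V else 1 : ℕ → ℝ) V (by linarith) 2 5 3 4 6 (by omega) (by omega) (by omega)
    (by omega) (by omega) (by omega) (by omega) (by omega) (by omega) (by omega)
    (by norm_num) (by norm_num) (by norm_num) (by norm_num) (by norm_num) T hT

lemma olb15 : 3 * V + 3 ≤ OPT (fun k => if k = 2 ∨ k = 5 then V else 1 : ℕ → ℝ) (Finset.Icc 1 5) := by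
  rw [show Finset.Icc 1 5 = ({2, 5, 1, 3, 4} : Finset ℕ) by decide]
  refine le_opt _ _ _ (chainL [2, 5, 1, 3, 4]) ⟨by decide, by decide⟩ fun T hT => ?_
  exact lb_five2 (fun k => if k = 2 ∨ k = 5 then V else 1 : ℕ → ℝ) V (by linarith) 2 5 1 3 4 (by omega) (by omega) (by omega)
    (by omega) (by omega) (by omega) (by omega) (by omega) (by omega) (by omega)
    (by norm_num) (by norm_num) (by norm_num) (by norm_num) (by norm_num) T hT

lemma onn11 : 0 ≤ OPT (fun k => if k = 2 ∨ k = 5 then V else 1 : ℕ → ℝ) (Finset.Icc 1 1) :=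
  opt_nonneg (fun k => if k = 2 ∨ k = 5 then V else 1 : ℕ → ℝ) (wl_nonneg V (by linarith)) _ (CTree.leaf 1) ⟨by decide, by decide⟩

lemma onn66 : 0 ≤ OPT (fun k => if k = 2 ∨ k = 5 then V else 1 : ℕ → ℝ) (Finset.Icc 6 6) :=
  opt_nonneg (fun k => if k = 2 ∨ k = 5 then V else 1 : ℕ → ℝ) (wl_nonneg V (by linarith)) _ (CTree.leaf 6) ⟨by decide, by decide⟩

lemma oub22 : OPT (fun k => if k = 2 ∨ k = 5 then V else 1 : ℕ → ℝ) (Finset.Icc 2 2) ≤ 0 := by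
  have h := opt_le (fun k => if k = 2 ∨ k = 5 then V else 1 : ℕ → ℝ) (wl_nonneg V (by linarith)) (Finset.Icc 2 2) (CTree.leaf 2) ⟨by decide, by decide⟩
  have : cost (fun k => if k = 2 ∨ k = 5 then V else 1 : ℕ → ℝ) (Finset.Icc 2 2) (CTree.leaf 2) = 0 := by
    rw [show Finset.Icc 2 2 = ({2} : Finset ℕ) by decide, cost, Finset.sum_singleton]
    norm_num [depthOf]
  linarith

lemma oub13 : OPT (fun k => if k = 2 ∨ k = 5 then V else 1 : ℕ → ℝ) (Finset.Icc 1 3) ≤ V + 4 := by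
  have h := opt_le (fun k => if k = 2 ∨ k = 5 then V else 1 : ℕ → ℝ) (wl_nonneg V (by linarith)) (Finset.Icc 1 3)
    (.eqTest 2 (.leaf 2) (.ltTest 2 (.leaf 1) (.leaf 3))) ⟨by decide, by decide⟩
  have e : cost (fun k => if k = 2 ∨ k = 5 then V else 1 : ℕ → ℝ) (Finset.Icc 1 3) (.eqTest 2 (.leaf 2) (.ltTest 2 (.leaf 1) (.leaf 3)))
      = V + 4 := by
    rw [show Finset.Icc 1 3 = ({1, 2, 3} : Finset ℕ) by decide, cost,
      Finset.sum_insert (by decide), Finset.sum_insert (by decide), Finset.sum_singleton]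
    norm_num [depthOf, searchKey]
    ring
  linarith

lemma oub46 : OPT (fun k => if k = 2 ∨ k = 5 then V else 1 : ℕ → ℝ) (Finset.Icc 4 6) ≤ V + 4 := by
  have h := opt_le (fun k => if k = 2 ∨ k = 5 then V else 1 : ℕ → ℝ) (wl_nonneg V (by linarith)) (Finset.Icc 4 6)
    (.eqTest 5 (.leaf 5) (.ltTest 5 (.leaf 4) (.leaf 6))) ⟨by decide, by decide⟩
  have e : cost (fun k => if k = 2 ∨ k = 5 then V else 1 : ℕ → ℝ) (Finset.Icc 4 6) (.eqTest 5 (.leaf 5) (.ltTest 5 (.leaf 4) (.leaf 6)))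
      = V + 4 := by
    rw [show Finset.Icc 4 6 = ({4, 5, 6} : Finset ℕ) by decide, cost,
      Finset.sum_insert (by decide), Finset.sum_insert (by decide), Finset.sum_singleton]
    norm_num [depthOf, searchKey]
    ring
  linarith

lemma oub36 : OPT (fun k => if k = 2 ∨ k = 5 then V else 1 : ℕ → ℝ) (Finset.Icc 3 6) ≤ V + 8 := by
  have h := opt_le (fun k => if k = 2 ∨ k = 5 then V else 1 : ℕ → ℝ) (wl_nonneg V (by linarith)) (Finset.Icc 3 6)
    (.eqTest 5 (.leaf 5) (.ltTest 4 (.leaf 3) (.ltTest 5 (.leaf 4) (.leaf 6)))) ⟨by decide, by decide⟩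
  have e : cost (fun k => if k = 2 ∨ k = 5 then V else 1 : ℕ → ℝ) (Finset.Icc 3 6)
      (.eqTest 5 (.leaf 5) (.ltTest 4 (.leaf 3) (.ltTest 5 (.leaf 4) (.leaf 6)))) = V + 8 := by
    rw [show Finset.Icc 3 6 = ({3, 4, 5, 6} : Finset ℕ) by decide, cost,
      Finset.sum_insert (by decide), Finset.sum_insert (by decide),
      Finset.sum_insert (by decide), Finset.sum_singleton]
    norm_num [depthOf, searchKey]
    ring
  linarith

end Inst

/-- Counter-example to minimizer monotonicity: for weights `(1,V,1,1,V,1)` with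
`V > 8`, the minimizer for `[1,6]` is uniquely `3` while the minimizer for
`[2,6]` is uniquely `2`. -/
theorem stmt12 (V : ℝ) (hV : 8 < V) :
    (∀ l ∈ Finset.Icc 1 5, l ≠ 3 →
      OPT (fun k => if k = 2 ∨ k = 5 then V else 1) (Finset.Icc 1 3)
        + OPT (fun k => if k = 2 ∨ k = 5 then V else 1) (Finset.Icc 4 6)
      < OPT (fun k => if k = 2 ∨ k = 5 then V else 1) (Finset.Icc 1 l)
        + OPT (fun k => if k = 2 ∨ k = 5 then V else 1) (Finset.Icc (l + 1) 6)) ∧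
    (∀ l ∈ Finset.Icc 2 5, l ≠ 2 →
      OPT (fun k => if k = 2 ∨ k = 5 then V else 1) (Finset.Icc 2 2)
        + OPT (fun k => if k = 2 ∨ k = 5 then V else 1) (Finset.Icc 3 6)
      < OPT (fun k => if k = 2 ∨ k = 5 then V else 1) (Finset.Icc 2 l)
        + OPT (fun k => if k = 2 ∨ k = 5 then V else 1) (Finset.Icc (l + 1) 6)) := by
  have h12 := olb12 V hV
  have h23 := olb23 V hV
  have h56 := olb56 V hV
  have h46 := olb46 V hV
  have h24 := olb24 V hV
  have h36 := olb36 V hV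
  have h14 := olb14 V hV
  have h25 := olb25 V hV
  have h26 := olb26 V hV
  have h15 := olb15 V hV
  have n11 := onn11 V hV
  have n66 := onn66 V hV
  have u22 := oub22 V hV
  rw [Finset.Icc_self] at n11 n66 u22
  have u13 := oub13 V hV
  have u46 := oub46 V hV
  have u36 := oub36 V hV
  constructor
  · intro l hl hne
    simp only [Finset.mem_Icc] at hl
    obtain ⟨hl1, hl2⟩ := hl
    interval_cases l
    · norm_num; linarith
    · norm_num; linarith
    · exact absurd rfl hne
    · norm_num; linarith
    · norm_num; linarith
  · intro l hl hne
    simp only [Finset.mem_Icc] at hl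
    obtain ⟨hl1, hl2⟩ := hl
    interval_cases l
    · exact absurd rfl hne
    · norm_num; linarith
    · norm_num; linarith
    · norm_num; linarith

end TwoWCST
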